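/- If I ⊆ k[[X]] is a nonzero ideal such that ψ(I) ⊆ I, then I = k[[X]]. -/

import Mathlib

/-- For `g ∈ k⟦X⟧`, `substXp p g` is the power series `g(X^p)`, whose coefficient of
`X^(p*n)` is the coefficient of `X^n` in `g`, all other coefficients being zero. -/
noncomputable def substXp (p : ℕ) {k : Type*} [Field k] (g : PowerSeries k) : PowerSeries k :=
  PowerSeries.mk fun n => if p ∣ n then PowerSeries.coeff (n / p) g else 0

open PowerSeries in
lemma substXp_zero (p : ℕ) {k : Type*} [Field k] : substXp p (0 : PowerSeries k) = 0 := by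
  ext n; simp [substXp]

open PowerSeries in
lemma substXp_X_pow (p : ℕ) (hp : 0 < p) {k : Type*} [Field k] (q : ℕ) :
    substXp p ((X : PowerSeries k) ^ q) = X ^ (p * q) := by
  ext n
  simp only [substXp, coeff_mk, coeff_X_pow]
  by_cases h : p ∣ n
  · obtain ⟨c, rfl⟩ := h
    simp only [dvd_mul_right, if_true, Nat.mul_div_cancel_left _ hp]
    by_cases hc : c = q <;> simp [hc, Nat.mul_left_cancel_iff hp]
  · rw [if_neg h, eq_comm, if_neg]
    rintro rfl
    exact h (dvd_mul_right p q)

open PowerSeries in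
lemma substXp_C (p : ℕ) (hp : 0 < p) {k : Type*} [Field k] (a : k) :
    substXp p (C a) = C a := by
  ext n
  simp only [substXp, coeff_mk, coeff_C]
  by_cases h : p ∣ n
  · rw [if_pos h]
    by_cases hn : n = 0
    · simp [hn, Nat.zero_div]
    · rw [if_neg hn, if_neg]
      intro hd
      exact hn (by rw [← Nat.div_mul_cancel h, hd, zero_mul])
  · rw [if_neg h, eq_comm, if_neg]
    rintro rfl
    exact h (dvd_zero p)

open PowerSeries in
lemma sum_single_aux (p : ℕ) {k : Type*} [Field k] (h : PowerSeries k) (z0 : Fin p)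
    (hz : (z0 : ℕ) = 0) :
    ∑ i : Fin p, (1 + X) ^ (i : ℕ) * substXp p (if i = z0 then h else 0) = substXp p h := by
  classical
  simp [apply_ite (substXp p), substXp_zero, mul_ite, mul_zero, Finset.sum_ite_eq', hz]

open PowerSeries in
/-- If `ψ : k⟦X⟧ → k⟦X⟧` is the operator sending `f = ∑_{i=0}^{p-1} (1+X)^i g_i(X^p)`
to `g_0`, and `I ⊆ k⟦X⟧` is a nonzero ideal with `ψ(I) ⊆ I`, then `I = k⟦X⟧`. -/
theorem psi_stable_ideal_eq_top
    (p : ℕ) (hp : p.Prime) (k : Type*) [Field k] [Fintype k] [CharP k p]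
    (ψ : PowerSeries k → PowerSeries k)
    (hψ : ∀ (f : PowerSeries k) (g : Fin p → PowerSeries k),
      f = ∑ i : Fin p, (1 + PowerSeries.X) ^ (i : ℕ) * substXp p (g i) → ψ f = g ⟨0, hp.pos⟩)
    (I : Ideal (PowerSeries k)) (hI : I ≠ ⊥) (hstab : ∀ f ∈ I, ψ f ∈ I) :
    I = ⊤ := by
  classical
  set z0 : Fin p := ⟨0, hp.pos⟩ with hz0
  set z1 : Fin p := ⟨1, hp.one_lt⟩ with hz1
  have hz01 : z0 ≠ z1 := by
    simp [hz0, hz1, Fin.ext_iff]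
  -- key strong induction
  have key : ∀ m : ℕ, (X : k⟦X⟧) ^ m ∈ I → I = ⊤ := by
    intro m
    induction m using Nat.strong_induction_on with
    | _ m ih =>
      intro hm
      match m, ih, hm with
      | 0, ih, hm =>
        rw [pow_zero] at hm
        exact I.eq_top_of_isUnit_mem hm isUnit_one
      | 1, ih, hm =>
        rw [pow_one] at hm
        -- ψ X = -1
        have hdec : (X : k⟦X⟧) =
            ∑ i : Fin p, (1 + X) ^ (i : ℕ) *
              substXp p (if i = z0 then C (-1 : k) else if i = z1 then 1 else 0) := by
          have hterm : ∀ i : Fin p,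
              (1 + X) ^ (i : ℕ) *
                substXp p (if i = z0 then C (-1 : k) else if i = z1 then 1 else 0) =
              (if i = z0 then C (-1 : k) else 0) + (if i = z1 then 1 + X else 0) := by
            intro i
            by_cases h0 : i = z0
            · subst h0
              rw [if_pos rfl, if_pos rfl, if_neg hz01, substXp_C p hp.pos]
              simp [hz0]
            · rw [if_neg h0, if_neg h0, zero_add]
              by_cases h1 : i = z1
              · subst h1
                rw [if_pos rfl, if_pos rfl]
                have : substXp p (1 : k⟦X⟧) = 1 := by
                  rw [← map_one (C (R := k)), substXp_C p hp.pos, map_one]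
                rw [this, mul_one]
                simp [hz1]
              · rw [if_neg h1, if_neg h1, substXp_zero, mul_zero]
          rw [Finset.sum_congr rfl fun i _ => hterm i, Finset.sum_add_distrib,
            Finset.sum_ite_eq' _ z0, Finset.sum_ite_eq' _ z1]
          simp only [Finset.mem_univ, if_true]
          rw [map_neg, map_one]
          ring
        have hpsi := hψ X _ hdec
        rw [if_pos rfl] at hpsi
        have : C (-1 : k) ∈ I := hpsi ▸ hstab X hm
        refine I.eq_top_of_isUnit_mem this ?_
        rw [map_neg, map_one]
        exact isUnit_one.neg
      | (m + 2), ih, hm =>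
        set q : ℕ := (m + 1) / p + 1 with hq
        have hlt : q < m + 2 := by
          have hd : (m + 1) / p < m + 1 := Nat.div_lt_self (by omega) hp.one_lt
          omega
        have hle : m + 2 ≤ p * q := by
          have h1 := Nat.div_add_mod (m + 1) p
          have h2 := Nat.mod_lt (m + 1) hp.pos
          rw [hq, mul_add, mul_one]
          linarith
        have hXpq : (X : k⟦X⟧) ^ (p * q) ∈ I := by
          have e : (X : k⟦X⟧) ^ (p * q) = X ^ (p * q - (m + 2)) * X ^ (m + 2) := by
            rw [← pow_add]
            congr 1
            omega
          rw [e]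
          exact I.mul_mem_left _ hm
        have hdec : (X : k⟦X⟧) ^ (p * q) =
            ∑ i : Fin p, (1 + X) ^ (i : ℕ) *
              substXp p (if i = z0 then X ^ q else 0) := by
          rw [sum_single_aux p _ z0 rfl, substXp_X_pow p hp.pos]
        have hpsi := hψ (X ^ (p * q)) _ hdec
        rw [if_pos rfl] at hpsi
        exact ih q hlt (hpsi ▸ hstab _ hXpq)
  -- find some power of X in I
  obtain ⟨f, hfI, hf0⟩ : ∃ f ∈ I, f ≠ 0 := by
    by_contra h
    push_neg at h
    exact hI ((Submodule.eq_bot_iff I).mpr h)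
  obtain ⟨v, hv⟩ := isUnit_divided_by_X_pow_order hf0
  have h1 := X_pow_order_mul_divXPowOrder (f := f)
  rw [← hv] at h1
  have e : (X : k⟦X⟧) ^ (f.order.toNat) = f * ↑v⁻¹ :=
    (Units.eq_mul_inv_iff_mul_eq v).mpr h1
  have hmem : f * (↑v⁻¹ : k⟦X⟧) ∈ I := I.mul_mem_right _ hfI
  rw [← e] at hmem
  exact key _ hmem
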